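/- Two-point propagator relations: let H : ℝ → Matrix n n ℂ be continuous with each H(t) Hermitian, and for each s ∈ ℝ let V(·;s) : ℝ → Matrix n n ℂ be the solution of d/dt V(t;s) = -i·H(t)·V(t;s) with V(s;s) = 1. Then for all t₁, t₂, t₃ ∈ ℝ: (i) each V(t₂;t₁) is unitary with (V(t₂;t₁))ᴴ = V(t₁;t₂), and (ii) V(t₃;t₂)·V(t₂;t₁) = V(t₃;t₁). -/

import Mathlib

open Matrix

attribute [local instance] Matrix.normedAddCommGroup Matrix.normedSpace

/-!
If `X` and `Y` both solve `X' = -i H X` with `H(t)` Hermitian, then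
`(Xᴴ Y)' = (i Xᴴ H) Y + Xᴴ (-i H Y) = 0`, so `Xᴴ Y` is constant in time. Applied to
`X = V(·;a)`, `Y = V(·;b)` and evaluated at `t = b` this gives
`V(t;a)ᴴ V(t;b) = V(b;a)ᴴ` for all `t, a, b`, from which unitarity, the adjoint relation and the
composition rule are read off by specialising `t, a, b`.
-/

section MatrixCalculus

variable {𝕜 R : Type*} [NontriviallyNormedField 𝕜] {l m n : Type*} {x : 𝕜}

theorem HasDerivAt.matrix_mul [Fintype m] [Fintype n] [NormedRing R] [NormedAlgebra 𝕜 R]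
    {A : 𝕜 → Matrix l m R} {B : 𝕜 → Matrix m n R} {A' : Matrix l m R} {B' : Matrix m n R}
    (hA : HasDerivAt A A' x) (hB : HasDerivAt B B' x) :
    HasDerivAt (fun y => A y * B y) (A' * B x + A x * B') x := by
  refine hasDerivAt_pi.2 fun i => hasDerivAt_pi.2 fun j => ?_
  simp only [mul_apply, Matrix.add_apply, ← Finset.sum_add_distrib]
  exact HasDerivAt.fun_sum fun k _ =>
    (hasDerivAt_pi.1 (hasDerivAt_pi.1 hA i) k).fun_mul (hasDerivAt_pi.1 (hasDerivAt_pi.1 hB k) j)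

theorem HasDerivAt.matrix_conjTranspose [Fintype m] [Fintype n] [StarRing 𝕜] [TrivialStar 𝕜]
    [NormedAddCommGroup R] [NormedSpace 𝕜 R] [StarAddMonoid R] [StarModule 𝕜 R] [ContinuousStar R]
    {A : 𝕜 → Matrix m n R} {A' : Matrix m n R} (hA : HasDerivAt A A' x) :
    HasDerivAt (fun y => (A y)ᴴ) A'ᴴ x :=
  hasDerivAt_pi.2 fun i => hasDerivAt_pi.2 fun j =>
    (hasDerivAt_pi.1 (hasDerivAt_pi.1 hA j) i).star

end MatrixCalculus

section Schrodinger

variable {m k l : Type*} [Fintype m] [Fintype k] [Fintype l]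

def SolvesSchrodinger (H : ℝ → Matrix m m ℂ) (X : ℝ → Matrix m k ℂ) : Prop :=
  ∀ t, HasDerivAt X ((-Complex.I) • (H t * X t)) t

theorem SolvesSchrodinger.hasDerivAt_conjTranspose_mul {H : ℝ → Matrix m m ℂ}
    (hH : ∀ t, (H t).IsHermitian) {X : ℝ → Matrix m k ℂ} {Y : ℝ → Matrix m l ℂ}
    (hX : SolvesSchrodinger H X) (hY : SolvesSchrodinger H Y) (t : ℝ) :
    HasDerivAt (fun τ => (X τ)ᴴ * Y τ) 0 t := by
  convert (hX t).matrix_conjTranspose.matrix_mul (hY t) using 1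
  simp [conjTranspose_smul, conjTranspose_mul, (hH t).eq, Matrix.mul_smul, Matrix.smul_mul,
    Matrix.mul_assoc]

theorem SolvesSchrodinger.conjTranspose_mul_eq {H : ℝ → Matrix m m ℂ}
    (hH : ∀ t, (H t).IsHermitian) {X : ℝ → Matrix m k ℂ} {Y : ℝ → Matrix m l ℂ}
    (hX : SolvesSchrodinger H X) (hY : SolvesSchrodinger H Y) (s t : ℝ) :
    (X t)ᴴ * Y t = (X s)ᴴ * Y s :=
  have hderiv := hX.hasDerivAt_conjTranspose_mul hH hY
  is_const_of_deriv_eq_zero (fun τ => (hderiv τ).differentiableAt) (fun τ => (hderiv τ).deriv) t s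

end Schrodinger

theorem two_point_propagator_relations_general {n : ℕ}
    (H : ℝ → Matrix (Fin n) (Fin n) ℂ)
    (hHherm : ∀ t, (H t).IsHermitian)
    (V : ℝ → ℝ → Matrix (Fin n) (Fin n) ℂ)
    (hVinit : ∀ s, V s s = 1)
    (hVde : ∀ s t, HasDerivAt (fun τ => V τ s) ((-Complex.I) • (H t * V t s)) t) :
    (∀ t₁ t₂, V t₂ t₁ ∈ Matrix.unitaryGroup (Fin n) ℂ ∧ (V t₂ t₁)ᴴ = V t₁ t₂) ∧
    ∀ t₁ t₂ t₃, V t₃ t₂ * V t₂ t₁ = V t₃ t₁ := by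
  have overlap : ∀ a b t, (V t a)ᴴ * V t b = (V b a)ᴴ := fun a b t => by
    rw [SolvesSchrodinger.conjTranspose_mul_eq hHherm (hVde a) (hVde b) b t, hVinit, mul_one]
  have adjoint : ∀ t₁ t₂, (V t₂ t₁)ᴴ = V t₁ t₂ := fun t₁ t₂ => by
    simpa [hVinit] using (overlap t₁ t₂ t₁).symm
  have unitary : ∀ t₁ t₂, V t₂ t₁ ∈ unitaryGroup (Fin n) ℂ := fun t₁ t₂ => by
    rw [mem_unitaryGroup_iff', star_eq_conjTranspose, overlap, hVinit, conjTranspose_one]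
  refine ⟨fun t₁ t₂ => ⟨unitary t₁ t₂, adjoint t₁ t₂⟩, fun t₁ t₂ t₃ => ?_⟩
  calc V t₃ t₂ * V t₂ t₁ = V t₃ t₂ * ((V t₃ t₂)ᴴ * V t₃ t₁) := by rw [overlap, adjoint]
    _ = V t₃ t₁ := by
      rw [← mul_assoc, ← star_eq_conjTranspose, mem_unitaryGroup_iff.1 (unitary t₂ t₃), one_mul]

/-- the two-point propagator `V(t₂;t₁)` of a continuous Hermitian
Hamiltonian family is unitary with `(V(t₂;t₁))ᴴ = V(t₁;t₂)`, and satisfies the composition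
rule `V(t₃;t₂) V(t₂;t₁) = V(t₃;t₁)`. Here `V t s` denotes `V(t;s)`. -/
theorem two_point_propagator_relations {n : ℕ} (hn : 1 ≤ n)
    (H : ℝ → Matrix (Fin n) (Fin n) ℂ)
    (hHcont : Continuous H) (hHherm : ∀ t, (H t).IsHermitian)
    (V : ℝ → ℝ → Matrix (Fin n) (Fin n) ℂ)
    (hVinit : ∀ s, V s s = 1)
    (hVde : ∀ s t, HasDerivAt (fun τ => V τ s) ((-Complex.I) • (H t * V t s)) t) :
    (∀ t₁ t₂, V t₂ t₁ ∈ Matrix.unitaryGroup (Fin n) ℂ ∧ (V t₂ t₁)ᴴ = V t₁ t₂) ∧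
    ∀ t₁ t₂ t₃, V t₃ t₂ * V t₂ t₁ = V t₃ t₁ :=
  two_point_propagator_relations_general H hHherm V hVinit hVde
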